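/- The derivative in σ of g(σ) = E_{z∼N(0,1)}[Φ(ε + σz) - Φ(σz)] equals E_{z∼N(0,1)}[z·φ(ε + σz)], where φ is the standard normal density, and this quantity is nonpositive for all ε ≥ 0 and σ > 0. -/

import Mathlib

open MeasureTheory ProbabilityTheory

/-- Standard normal pdf. -/
noncomputable def stdphi (t : ℝ) : ℝ := Real.exp (-t ^ 2 / 2) / Real.sqrt (2 * Real.pi)

/-- Standard normal CDF. -/
noncomputable def stdPhi (t : ℝ) : ℝ := ∫ u in Set.Iic t, stdphi u

/-!
Differentiating under the integral sign, with domination by `|z|` because `0 ≤ φ ≤ 1`, gives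
`E[z (φ(ε + σz) - φ(σz))]`, and `E[z φ(σz)] = 0` since `z φ(σz)` is odd while `N(0,1)` is
symmetric. By the same symmetry, `E[z φ(ε + σz)] = ½ E[z (φ(ε + σz) - φ(ε - σz))]`, and this
integrand is pointwise `≤ 0`: for `ε, σ ≥ 0` and `z ≥ 0` the point `ε + σz` is farther from the
origin than `ε - σz`, and the reverse holds for `z ≤ 0`.
-/

open Real Set

lemma stdphi_eq_gaussianPDFReal : stdphi = gaussianPDFReal 0 1 := by
  ext t
  simp [stdphi, gaussianPDFReal, div_eq_inv_mul]

@[fun_prop]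
lemma continuous_stdphi : Continuous stdphi := by
  unfold stdphi
  fun_prop

lemma stdphi_nonneg (t : ℝ) : 0 ≤ stdphi t := by
  unfold stdphi
  positivity

lemma stdphi_le_one (t : ℝ) : stdphi t ≤ 1 := by
  have h_exp : exp (-t ^ 2 / 2) ≤ 1 := exp_le_one_iff.2 (by nlinarith [sq_nonneg t])
  have h_sqrt : 1 ≤ √(2 * π) := one_le_sqrt.2 (by linarith [pi_gt_three])
  exact div_le_one_of_le₀ (h_exp.trans h_sqrt) (sqrt_nonneg _)

lemma stdphi_neg (t : ℝ) : stdphi (-t) = stdphi t := by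
  simp [stdphi]

lemma stdphi_le_stdphi_of_sq_le {a b : ℝ} (h : b ^ 2 ≤ a ^ 2) : stdphi a ≤ stdphi b := by
  unfold stdphi
  gcongr

lemma integrable_stdphi : Integrable stdphi := by
  rw [stdphi_eq_gaussianPDFReal]
  exact integrable_gaussianPDFReal 0 1

lemma integral_stdphi : ∫ t, stdphi t = 1 := by
  rw [stdphi_eq_gaussianPDFReal]
  exact integral_gaussianPDFReal_eq_one 0 one_ne_zero

lemma hasDerivAt_stdPhi (t : ℝ) : HasDerivAt stdPhi (stdphi t) t := by
  have h_eq : stdPhi = fun x => (∫ u in (0 : ℝ)..x, stdphi u) + stdPhi 0 := by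
    ext x
    rw [← intervalIntegral.integral_Iic_sub_Iic integrable_stdphi.integrableOn
      integrable_stdphi.integrableOn, stdPhi, stdPhi, sub_add_cancel]
  rw [h_eq]
  exact (intervalIntegral.integral_hasDerivAt_right integrable_stdphi.intervalIntegrable
    (continuous_stdphi.stronglyMeasurableAtFilter _ _) continuous_stdphi.continuousAt).add_const _

@[fun_prop]
lemma continuous_stdPhi : Continuous stdPhi :=
  continuous_iff_continuousAt.2 fun t => (hasDerivAt_stdPhi t).continuousAt

lemma stdPhi_nonneg (t : ℝ) : 0 ≤ stdPhi t :=
  setIntegral_nonneg measurableSet_Iic fun u _ => stdphi_nonneg u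

lemma stdPhi_le_one (t : ℝ) : stdPhi t ≤ 1 :=
  integral_stdphi ▸ setIntegral_le_integral integrable_stdphi (.of_forall stdphi_nonneg)

lemma mul_stdphi_add_sub_stdphi_sub_nonpos {ε σ : ℝ} (hε : 0 ≤ ε) (hσ : 0 ≤ σ) (z : ℝ) :
    z * (stdphi (ε + σ * z) - stdphi (ε - σ * z)) ≤ 0 := by
  rcases le_total 0 z with hz | hz
  · refine mul_nonpos_of_nonneg_of_nonpos hz (sub_nonpos.2 (stdphi_le_stdphi_of_sq_le ?_))
    nlinarith [mul_nonneg (mul_nonneg hε hσ) hz]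
  · refine mul_nonpos_of_nonpos_of_nonneg hz (sub_nonneg.2 (stdphi_le_stdphi_of_sq_le ?_))
    nlinarith [mul_nonneg (mul_nonneg hε hσ) (neg_nonneg.2 hz)]

lemma integral_eq_zero_of_odd {G : Type*} [MeasurableSpace G] [AddGroup G] [MeasurableNeg G]
    {μ : Measure G} [μ.IsNegInvariant] {f : G → ℝ} (hf : Function.Odd f) : ∫ x, f x ∂μ = 0 := by
  simpa [hf _, integral_neg, neg_eq_self] using integral_neg_eq_self f μ

instance isNegInvariant_gaussianReal_zero (v : NNReal) : (gaussianReal 0 v).IsNegInvariant :=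
  ⟨(gaussianReal_map_neg (μ := 0) (v := v)).trans (by rw [neg_zero])⟩

variable {μ : Measure ℝ}

lemma integrable_mul_stdphi (hμ : Integrable id μ) (c d : ℝ) :
    Integrable (fun z => z * stdphi (c + d * z)) μ :=
  hμ.mul_bdd (by fun_prop) (c := 1) <| .of_forall fun z => by
    rw [norm_of_nonneg (stdphi_nonneg _)]
    exact stdphi_le_one _

lemma integral_mul_stdphi_add_mul_nonpos [μ.IsNegInvariant] (hμ : Integrable id μ) {ε σ : ℝ}
    (hε : 0 ≤ ε) (hσ : 0 ≤ σ) : ∫ z, z * stdphi (ε + σ * z) ∂μ ≤ 0 := by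
  have h_reflect : ∫ z, z * stdphi (ε + σ * z) ∂μ = ∫ z, -z * stdphi (ε - σ * z) ∂μ := by
    rw [← integral_neg_eq_self]
    simp only [mul_neg, ← sub_eq_add_neg]
  have h_sum : ∫ z, z * (stdphi (ε + σ * z) - stdphi (ε - σ * z)) ∂μ ≤ 0 :=
    integral_nonpos (mul_stdphi_add_sub_stdphi_sub_nonpos hε hσ)
  have h_int : Integrable (fun z => z * stdphi (ε - σ * z)) μ := by
    simpa [sub_eq_add_neg] using integrable_mul_stdphi hμ ε (-σ)
  simp only [mul_sub] at h_sum
  rw [integral_sub (integrable_mul_stdphi hμ ε σ) h_int] at h_sum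
  simp only [neg_mul, integral_neg] at h_reflect
  linarith

lemma hasDerivAt_integral_comp_mul (hμ : Integrable id μ) {G g : ℝ → ℝ}
    (hG : ∀ t, HasDerivAt G (g t) t) {C : ℝ} (hg : ∀ t, |g t| ≤ C) {σ : ℝ}
    (hGσ : Integrable (fun z => G (σ * z)) μ) :
    HasDerivAt (fun s => ∫ z, G (s * z) ∂μ) (∫ z, z * g (σ * z) ∂μ) σ := by
  have hG_cont : Continuous G := continuous_iff_continuousAt.2 fun t => (hG t).continuousAt
  have hg_meas : Measurable g := by
    rw [show g = deriv G from funext fun t => (hG t).deriv.symm]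
    exact measurable_deriv G
  refine (hasDerivAt_integral_of_dominated_loc_of_deriv_le (bound := fun z => C * |z|)
    (F' := fun s z => z * g (s * z)) Filter.univ_mem (.of_forall fun s => by fun_prop) hGσ
    (by fun_prop) (.of_forall fun z s _ => ?_) (hμ.abs.const_mul C)
    (.of_forall fun z s _ => ?_)).2
  · rw [norm_mul, norm_eq_abs, norm_eq_abs, mul_comm]
    exact mul_le_mul_of_nonneg_right (hg _) (abs_nonneg _)
  · exact ((hG (s * z)).comp s (hasDerivAt_mul_const z)).congr_deriv (mul_comm _ _)

/-- The derivative in `σ` of `g(σ) = E_{z∼N(0,1)}[Φ(ε+σz) - Φ(σz)]` is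
`E_{z∼N(0,1)}[z φ(ε+σz)]`, which is nonpositive for `ε ≥ 0`, `σ > 0`. -/
theorem gauss_smoothing_deriv (ε : ℝ) (hε : 0 ≤ ε) (σ : ℝ) (hσ : 0 < σ) :
    HasDerivAt (fun s : ℝ => ∫ z, (stdPhi (ε + s * z) - stdPhi (s * z)) ∂(gaussianReal 0 1))
      (∫ z, z * stdphi (ε + σ * z) ∂(gaussianReal 0 1)) σ ∧
    (∫ z, z * stdphi (ε + σ * z) ∂(gaussianReal 0 1)) ≤ 0 := by
  have hμ : Integrable id (gaussianReal 0 1) := IsGaussian.integrable_id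
  refine ⟨?_, integral_mul_stdphi_add_mul_nonpos hμ hε hσ.le⟩
  have h_diff_deriv (t : ℝ) :
      HasDerivAt (fun t => stdPhi (ε + t) - stdPhi t) (stdphi (ε + t) - stdphi t) t :=
    ((hasDerivAt_stdPhi (ε + t)).comp_const_add ε t).sub (hasDerivAt_stdPhi t)
  have h_diff_bound (t : ℝ) : |stdphi (ε + t) - stdphi t| ≤ 1 :=
    abs_sub_le_of_nonneg_of_le (stdphi_nonneg _) (stdphi_le_one _) (stdphi_nonneg _)
      (stdphi_le_one _)
  have h_int : Integrable (fun z => stdPhi (ε + σ * z) - stdPhi (σ * z)) (gaussianReal 0 1) :=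
    .of_bound (by fun_prop) 1 <| .of_forall fun z => abs_sub_le_of_nonneg_of_le
      (stdPhi_nonneg _) (stdPhi_le_one _) (stdPhi_nonneg _) (stdPhi_le_one _)
  convert hasDerivAt_integral_comp_mul hμ h_diff_deriv h_diff_bound h_int using 1
  have h_odd : ∫ z, z * stdphi (σ * z) ∂(gaussianReal 0 1) = 0 :=
    integral_eq_zero_of_odd fun z => by simp only [mul_neg, stdphi_neg, neg_mul]
  simp only [mul_sub]
  rw [integral_sub (integrable_mul_stdphi hμ ε σ) (by simpa using integrable_mul_stdphi hμ 0 σ),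
    h_odd, sub_zero]
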